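/- arXiv:1409.4659 — 3 statements merged into one kernel-verified Lean document; each statement's English description precedes it below -/
import Mathlib

section
/- Let b_i denote the unique fixed point of the contraction f_i (so f_i(b_i) = b_i). If M = sup{|b_i| : i ∈ ℕ} < ∞ and σ* = sup{σ_i : i ∈ ℕ} < 1, then the pullback attractor of the non-autonomous iterated function system exists. -/
open Set Metric Filter Bornology MeasureTheory
open scoped ENNReal NNReal

/-- A non-autonomous iterated function system: contractions `f i` with ratios
`σ i ∈ (0,1)` and finite nonempty index sets `I k ⊆ ℕ` for `k ≥ 1`. -/
structure NAIFS (E : Type*) [MetricSpace E] where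
  f : ℕ → E → E
  σ : ℕ → ℝ
  σ_pos : ∀ i, 0 < σ i
  σ_lt_one : ∀ i, σ i < 1
  contract : ∀ i x y, dist (f i x) (f i y) ≤ σ i * dist x y
  I : ℕ → Finset ℕ
  I_nonempty : ∀ k, 1 ≤ k → (I k).Nonempty

variable {E : Type*} [MetricSpace E]

/-- `S^k(B) = ⋃_{i ∈ I_{k+1}} f_i(B)`. -/
def Sstep (sys : NAIFS E) (k : ℕ) (B : Set E) : Set E :=
  ⋃ i ∈ sys.I (k + 1), sys.f i '' B

/-- `SiterN sys k n B = S^{k, k+n}(B) = S^k ∘ ⋯ ∘ S^{k+n-1} (B)`. -/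
def SiterN (sys : NAIFS E) : ℕ → ℕ → Set E → Set E
  | _, 0, B => B
  | k, n + 1, B => Sstep sys k (SiterN sys (k + 1) n B)

/-- Hausdorff semi-distance `ρ_H(A,B) = sup_{x ∈ A} inf_{y ∈ B} d(x,y)`. -/
noncomputable def semidist (A B : Set E) : ℝ≥0∞ :=
  ⨆ x ∈ A, EMetric.infEdist x B

/-- `{F^k}` is a pullback attractor: each `F^k` compact, uniformly bounded,
invariant `F^k = S^k(F^{k+1})`, and `ρ_H(S^{k,l}(B), F^k) → 0` as `l → ∞`
for every bounded `B`. -/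
def IsPullbackAttractor (sys : NAIFS E) (F : ℕ → Set E) : Prop :=
  (∀ k, IsCompact (F k)) ∧
  IsBounded (⋃ k, F k) ∧
  (∀ k, F k = Sstep sys k (F (k + 1))) ∧
  (∀ B : Set E, IsBounded B → ∀ k,
    Tendsto (fun l => semidist (SiterN sys k (l - k) B) (F k)) atTop (nhds 0))

/-
Every `f i` moves a point at distance `r` from the fixed point `b i` to distance at most `σ* r`,
so with `|b i| ≤ M` the closed ball of radius `R = M (1 + σ*) / (1 - σ*)` about the origin is
mapped into itself by every `f i`. Iterating `S` on this ball `X` gives, for each `k`, a decreasing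
sequence of nonempty compact sets `S^{k,k+n}(X)`; their intersection `F^k` is nonempty and compact,
and `F^k = S^k(F^{k+1})` because a decreasing intersection of compact sets commutes with continuous
images and with finite unions. Finally `F^k = S^{k,k+n}(F^{k+n})`, and `S^{k,k+n}` shrinks
Hausdorff semi-distances by `σ*^n`, so `ρ_H(S^{k,k+n}(B), F^k) ≤ σ*^n · diam (B ∪ X) → 0`.
-/

theorem Directed.iInter_image_of_isCompact {X Y ι : Type*} [TopologicalSpace X] [T2Space X]
    [TopologicalSpace Y] [T1Space Y] [Nonempty ι] {A : ι → Set X}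
    (hA : Directed (· ⊇ ·) A) (hAc : ∀ i, IsCompact (A i)) {g : X → Y} (hg : Continuous g) :
    ⋂ i, g '' A i = g '' ⋂ i, A i := by
  refine (Set.image_iInter_subset A g).antisymm' fun y hy => ?_
  have hfiber : ∀ i, IsClosed (A i ∩ g ⁻¹' {y}) :=
    fun i => (hAc i).isClosed.inter (isClosed_singleton.preimage hg)
  obtain ⟨x, hx⟩ := IsCompact.nonempty_iInter_of_directed_nonempty_isCompact_isClosed
    (fun i => A i ∩ g ⁻¹' {y})
    (fun i j => let ⟨k, hki, hkj⟩ := hA i j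
      ⟨k, Set.inter_subset_inter_left _ hki, Set.inter_subset_inter_left _ hkj⟩)
    (fun i => by obtain ⟨x, hx, rfl⟩ := Set.mem_iInter.1 hy i; exact ⟨x, hx, rfl⟩)
    (fun i => (hAc i).of_isClosed_subset (hfiber i) Set.inter_subset_left) hfiber
  obtain ⟨i⟩ := ‹Nonempty ι›
  exact ⟨x, Set.mem_iInter.2 fun j => (Set.mem_iInter.1 hx j).1, (Set.mem_iInter.1 hx i).2⟩

theorem LipschitzWith.infEDist_image_le {α β : Type*} [PseudoEMetricSpace α]
    [PseudoEMetricSpace β] {K : ℝ≥0} {f : α → β} (hf : LipschitzWith K f) (hK : K ≠ 0)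
    (x : α) (s : Set α) : Metric.infEDist (f x) (f '' s) ≤ K * Metric.infEDist x s := by
  simp only [Metric.infEDist, iInf_image,
    ENNReal.mul_iInf_of_ne (ENNReal.coe_ne_zero.2 hK) ENNReal.coe_ne_top]
  exact iInf₂_mono fun z _ => hf x z

section NAIFS

variable (sys : NAIFS E)

theorem NAIFS.lipschitzWith_f {s : ℝ} (hσs : ∀ i, sys.σ i ≤ s) (i : ℕ) :
    LipschitzWith s.toNNReal (sys.f i) :=
  .of_dist_le' fun x y =>
    (sys.contract i x y).trans (mul_le_mul_of_nonneg_right (hσs i) dist_nonneg)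

theorem NAIFS.continuous_f (i : ℕ) : Continuous (sys.f i) :=
  (LipschitzWith.of_dist_le' (sys.contract i)).continuous

theorem NAIFS.mapsTo_closedBall {i : ℕ} {b c : E} (hb : sys.f i b = b) {s M R : ℝ}
    (hσs : sys.σ i ≤ s) (hbc : dist b c ≤ M) (hR : M * (1 + s) ≤ R * (1 - s)) :
    MapsTo (sys.f i) (closedBall c R) (closedBall c R) := by
  intro x hx
  rw [mem_closedBall] at hx ⊢
  have hs : 0 ≤ s := (sys.σ_pos i).le.trans hσs
  have hxb : dist x b ≤ R + M := (dist_triangle_right x b c).trans (add_le_add hx hbc)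
  calc dist (sys.f i x) c ≤ dist (sys.f i x) (sys.f i b) + dist b c := by
        rw [hb]; exact dist_triangle _ _ _
    _ ≤ s * (R + M) + M := by
        gcongr
        exact (sys.contract i x b).trans (mul_le_mul (hσs) hxb dist_nonneg hs)
    _ ≤ R := by linarith

theorem Sstep_mono (k : ℕ) {B B' : Set E} (h : B ⊆ B') : Sstep sys k B ⊆ Sstep sys k B' :=
  Set.iUnion₂_mono fun _ _ => Set.image_mono h

theorem SiterN_mono (n k : ℕ) {B B' : Set E} (h : B ⊆ B') :
    SiterN sys k n B ⊆ SiterN sys k n B' := by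
  induction n generalizing k with
  | zero => exact h
  | succ n ih => exact Sstep_mono sys k (ih (k + 1))

theorem SiterN_succ_right (n k : ℕ) (B : Set E) :
    SiterN sys k (n + 1) B = SiterN sys k n (Sstep sys (k + n) B) := by
  induction n generalizing k with
  | zero => rfl
  | succ n ih =>
    change Sstep sys k (SiterN sys (k + 1) (n + 1) B) = Sstep sys k _
    rw [ih, Nat.add_right_comm]
    rfl

theorem Sstep_nonempty (k : ℕ) {B : Set E} (hB : B.Nonempty) : (Sstep sys k B).Nonempty := by
  obtain ⟨i, hi⟩ := sys.I_nonempty (k + 1) k.succ_pos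
  exact Set.nonempty_biUnion.2 ⟨i, hi, hB.image _⟩

theorem SiterN_nonempty (n k : ℕ) {B : Set E} (hB : B.Nonempty) :
    (SiterN sys k n B).Nonempty := by
  induction n generalizing k with
  | zero => exact hB
  | succ n ih => exact Sstep_nonempty sys k (ih (k + 1))

theorem isCompact_Sstep (k : ℕ) {B : Set E} (hB : IsCompact B) : IsCompact (Sstep sys k B) :=
  (sys.I (k + 1)).finite_toSet.isCompact_biUnion fun i _ => hB.image (sys.continuous_f i)

theorem isCompact_SiterN (n k : ℕ) {B : Set E} (hB : IsCompact B) :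
    IsCompact (SiterN sys k n B) := by
  induction n generalizing k with
  | zero => exact hB
  | succ n ih => exact isCompact_Sstep sys k (ih (k + 1))

theorem semidist_Sstep_le {K : ℝ≥0} (hK : K ≠ 0) (hf : ∀ i, LipschitzWith K (sys.f i))
    (k : ℕ) (B B' : Set E) :
    semidist (Sstep sys k B) (Sstep sys k B') ≤ K * semidist B B' := by
  refine iSup₂_le fun x hx => ?_
  obtain ⟨i, hi, y, hy, rfl⟩ := Set.mem_iUnion₂.1 hx
  calc Metric.infEDist (sys.f i y) (Sstep sys k B')
      ≤ Metric.infEDist (sys.f i y) (sys.f i '' B') :=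
        Metric.infEDist_anti (Set.subset_biUnion_of_mem (u := fun j => sys.f j '' B') hi)
    _ ≤ K * Metric.infEDist y B' := (hf i).infEDist_image_le hK y B'
    _ ≤ K * semidist B B' := by
        gcongr
        exact le_iSup₂ (f := fun x (_ : x ∈ B) => Metric.infEDist x B') y hy

theorem semidist_SiterN_le {K : ℝ≥0} (hK : K ≠ 0) (hf : ∀ i, LipschitzWith K (sys.f i))
    (n k : ℕ) (B B' : Set E) :
    semidist (SiterN sys k n B) (SiterN sys k n B') ≤ K ^ n * semidist B B' := by
  induction n generalizing k with
  | zero => simp [SiterN]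
  | succ n ih =>
    calc semidist (SiterN sys k (n + 1) B) (SiterN sys k (n + 1) B')
        ≤ K * semidist (SiterN sys (k + 1) n B) (SiterN sys (k + 1) n B') :=
          semidist_Sstep_le sys hK hf k _ _
      _ ≤ K * (K ^ n * semidist B B') := by gcongr; exact ih (k + 1)
      _ = K ^ (n + 1) * semidist B B' := by rw [pow_succ', mul_assoc]

theorem semidist_le_ediam_union {A B : Set E} (hA : A.Nonempty) :
    semidist B A ≤ Metric.ediam (B ∪ A) := by
  obtain ⟨y, hy⟩ := hA
  exact iSup₂_le fun x hx => (Metric.infEDist_le_edist_of_mem hy).trans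
    (Metric.edist_le_ediam_of_mem (Set.mem_union_left _ hx) (Set.mem_union_right _ hy))

end NAIFS

section PullbackLimit

variable (sys : NAIFS E) {X : Set E}

def pullbackLimit (X : Set E) (k : ℕ) : Set E :=
  ⋂ n, SiterN sys k n X

theorem Sstep_subset (hX : ∀ i, MapsTo (sys.f i) X X) (k : ℕ) {B : Set E} (hB : B ⊆ X) :
    Sstep sys k B ⊆ X :=
  Set.iUnion₂_subset fun i _ => (hX i).mono_left hB |>.image_subset

theorem SiterN_subset (hX : ∀ i, MapsTo (sys.f i) X X) (n k : ℕ) : SiterN sys k n X ⊆ X := by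
  induction n generalizing k with
  | zero => exact subset_rfl
  | succ n ih => exact Sstep_subset sys hX k (ih (k + 1))

theorem antitone_SiterN (hX : ∀ i, MapsTo (sys.f i) X X) (k : ℕ) :
    Antitone fun n => SiterN sys k n X :=
  antitone_nat_of_succ_le fun n => by
    rw [SiterN_succ_right]
    exact SiterN_mono sys n k (Sstep_subset sys hX (k + n) subset_rfl)

theorem pullbackLimit_subset (k : ℕ) : pullbackLimit sys X k ⊆ X :=
  Set.iInter_subset _ 0

theorem isCompact_pullbackLimit (hXc : IsCompact X) (k : ℕ) :
    IsCompact (pullbackLimit sys X k) :=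
  hXc.of_isClosed_subset
    (isClosed_iInter fun n => (isCompact_SiterN sys n k hXc).isClosed) (pullbackLimit_subset sys k)

theorem pullbackLimit_nonempty (hXc : IsCompact X) (hXne : X.Nonempty)
    (hX : ∀ i, MapsTo (sys.f i) X X) (k : ℕ) : (pullbackLimit sys X k).Nonempty :=
  IsCompact.nonempty_iInter_of_directed_nonempty_isCompact_isClosed _
    (antitone_SiterN sys hX k).directed_ge (fun n => SiterN_nonempty sys n k hXne)
    (fun n => isCompact_SiterN sys n k hXc) (fun n => (isCompact_SiterN sys n k hXc).isClosed)

theorem pullbackLimit_eq_Sstep (hXc : IsCompact X) (hX : ∀ i, MapsTo (sys.f i) X X) (k : ℕ) :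
    pullbackLimit sys X k = Sstep sys k (pullbackLimit sys X (k + 1)) := by
  have hanti := antitone_SiterN sys hX (k + 1)
  calc pullbackLimit sys X k
      = ⋂ n, ⋃ i : sys.I (k + 1), sys.f i '' SiterN sys (k + 1) n X := by
        rw [pullbackLimit, ← (antitone_SiterN sys hX k).iInter_nat_add 1]
        simp only [SiterN, Sstep, Set.iUnion_subtype]
    _ = ⋃ i : sys.I (k + 1), ⋂ n, sys.f i '' SiterN sys (k + 1) n X :=
        Set.iInter_iUnion_of_antitone fun i _ _ h => Set.image_mono (hanti h)
    _ = Sstep sys k (pullbackLimit sys X (k + 1)) := by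
        simp only [Directed.iInter_image_of_isCompact hanti.directed_ge
          (fun n => isCompact_SiterN sys n (k + 1) hXc) (sys.continuous_f _)]
        simp only [Sstep, pullbackLimit, Set.iUnion_subtype]

theorem pullbackLimit_eq_SiterN (hXc : IsCompact X) (hX : ∀ i, MapsTo (sys.f i) X X)
    (n k : ℕ) : pullbackLimit sys X k = SiterN sys k n (pullbackLimit sys X (k + n)) := by
  induction n generalizing k with
  | zero => rfl
  | succ n ih =>
    rw [pullbackLimit_eq_Sstep sys hXc hX, ih (k + 1), Nat.add_right_comm]
    rfl

theorem tendsto_semidist_SiterN_pullbackLimit {s : ℝ} (hσs : ∀ i, sys.σ i ≤ s) (hs : s < 1)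
    (hXc : IsCompact X) (hXne : X.Nonempty) (hX : ∀ i, MapsTo (sys.f i) X X)
    {B : Set E} (hB : IsBounded B) (k : ℕ) :
    Tendsto (fun n => semidist (SiterN sys k n B) (pullbackLimit sys X k)) atTop (nhds 0) := by
  have hK₀ : s.toNNReal ≠ 0 := (Real.toNNReal_pos.2 ((sys.σ_pos 0).trans_le (hσs 0))).ne'
  have hK₁ : (s.toNNReal : ℝ≥0∞) < 1 := ENNReal.coe_lt_one_iff.2 (Real.toNNReal_lt_one.2 hs)
  have hdiam : Metric.ediam (B ∪ X) ≠ ⊤ := (hB.union hXc.isBounded).ediam_ne_top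
  have hbound : ∀ n, semidist (SiterN sys k n B) (pullbackLimit sys X k)
      ≤ (s.toNNReal : ℝ≥0∞) ^ n * Metric.ediam (B ∪ X) := fun n =>
    calc semidist (SiterN sys k n B) (pullbackLimit sys X k)
        = semidist (SiterN sys k n B) (SiterN sys k n (pullbackLimit sys X (k + n))) := by
          rw [← pullbackLimit_eq_SiterN sys hXc hX]
      _ ≤ s.toNNReal ^ n * semidist B (pullbackLimit sys X (k + n)) :=
          semidist_SiterN_le sys hK₀ (sys.lipschitzWith_f hσs) n k _ _
      _ ≤ s.toNNReal ^ n * Metric.ediam (B ∪ X) := by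
          gcongr
          exact (semidist_le_ediam_union (pullbackLimit_nonempty sys hXc hXne hX _)).trans
            (Metric.ediam_mono (Set.union_subset_union_right _ (pullbackLimit_subset sys _)))
  have hlim := ENNReal.Tendsto.mul_const (ENNReal.tendsto_pow_atTop_nhds_zero_of_lt_one hK₁)
    (Or.inr hdiam)
  rw [zero_mul] at hlim
  exact tendsto_of_tendsto_of_tendsto_of_le_of_le tendsto_const_nhds hlim (fun _ => zero_le)
    hbound

theorem isPullbackAttractor_pullbackLimit {s : ℝ} (hσs : ∀ i, sys.σ i ≤ s) (hs : s < 1)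
    (hXc : IsCompact X) (hXne : X.Nonempty) (hX : ∀ i, MapsTo (sys.f i) X X) :
    IsPullbackAttractor sys (pullbackLimit sys X) :=
  ⟨isCompact_pullbackLimit sys hXc,
    hXc.isBounded.subset (Set.iUnion_subset (pullbackLimit_subset sys)),
    pullbackLimit_eq_Sstep sys hXc hX, fun _ hB k =>
    (tendsto_semidist_SiterN_pullbackLimit sys hσs hs hXc hXne hX hB k).comp
      (tendsto_sub_atTop_nat k)⟩

end PullbackLimit

/-- If the fixed points `b_i` of the contractions `f_i` are
uniformly bounded and `σ* = sup σ_i < 1`, then the pullback attractor exists. -/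
theorem pullback_attractor_exists {d : ℕ}
    (sys : NAIFS (EuclideanSpace ℝ (Fin d)))
    (b : ℕ → EuclideanSpace ℝ (Fin d))
    (hb : ∀ i, sys.f i (b i) = b i)
    (hM : ∃ M : ℝ, ∀ i, ‖b i‖ ≤ M)
    (hσ : sSup (Set.range sys.σ) < 1) :
    ∃ F : ℕ → Set (EuclideanSpace ℝ (Fin d)), IsPullbackAttractor sys F := by
  obtain ⟨M, hM⟩ := hM
  set s := sSup (Set.range sys.σ)
  have hσs : ∀ i, sys.σ i ≤ s :=
    fun i => le_csSup ⟨1, by rintro _ ⟨j, rfl⟩; exact (sys.σ_lt_one j).le⟩ ⟨i, rfl⟩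
  have hM₀ : 0 ≤ M := (norm_nonneg _).trans (hM 0)
  have hs₀ : 0 ≤ s := (sys.σ_pos 0).le.trans (hσs 0)
  set R := M * (1 + s) / (1 - s)
  have hR : M * (1 + s) = R * (1 - s) := (div_mul_cancel₀ _ (sub_pos.2 hσ).ne').symm
  have hX : ∀ i, MapsTo (sys.f i) (closedBall 0 R) (closedBall 0 R) := fun i =>
    sys.mapsTo_closedBall (hb i) (hσs i) (by simpa using hM i) hR.le
  have hXne : (closedBall (0 : EuclideanSpace ℝ (Fin d)) R).Nonempty :=
    nonempty_closedBall.2 (div_nonneg (by positivity) (sub_pos.2 hσ).le)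
  exact ⟨_, isPullbackAttractor_pullbackLimit sys hσs hσ (isCompact_closedBall 0 R) hXne hX⟩
end

section
/- If a non-autonomous iterated function system satisfies the generalised Moran open-set condition and satisfies sup{|b_i| : i ∈ ℕ} < ∞ and sup{σ_i : i ∈ ℕ} < 1 (where b_i is the fixed point of f_i), then its pullback attractor satisfies F^k ⊆ closure(U^k) for every k ∈ ℕ₀. -/
open Set Metric Filter Bornology MeasureTheory
open scoped ENNReal NNReal

variable {E : Type*} [MetricSpace E]

/-- The generalised Moran open-set condition: uniformly bounded nonempty open
sets `U^k` with `S^k(U^{k+1}) ⊆ U^k`, `f_i(U^k) ∩ f_j(U^k) = ∅` for distinct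
`i, j ∈ I_k`, and `λ(U^k) ≥ ε₀ > 0`. -/
def GenMoranOSC {d : ℕ} (sys : NAIFS (EuclideanSpace ℝ (Fin d)))
    (U : ℕ → Set (EuclideanSpace ℝ (Fin d))) (ε₀ : ℝ) : Prop :=
  (∀ k, (U k).Nonempty) ∧
  (∀ k, IsOpen (U k)) ∧
  IsBounded (⋃ k, U k) ∧
  (∀ k, Sstep sys k (U (k + 1)) ⊆ U k) ∧
  (∀ k, 1 ≤ k → ∀ i ∈ sys.I k, ∀ j ∈ sys.I k, i ≠ j →
    sys.f i '' U k ∩ sys.f j '' U k = ∅) ∧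
  0 < ε₀ ∧
  (∀ k, ENNReal.ofReal ε₀ ≤ volume (U k))

/-
Iterating the invariance `F^k = S^k(F^{k+1})` gives `F^k = S^{k,k+n}(F^{k+n})`, while iterating
`S^k(U^{k+1}) ⊆ U^k` gives `S^{k,k+n}(U^{k+n}) ⊆ U^k`. Every point of `F^{k+n}` lies within
`D = diam (⋃ F ∪ ⋃ U)` of the nonempty set `U^{k+n}`, and each of the `n` maps applied shrinks distances
by a factor at most `s = sup σ_i < 1`, so every point of `F^k` lies within `s^n D` of `U^k`.
-/

open scoped Topology

namespace NAIFS

variable (sys : NAIFS E)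

lemma mem_Sstep {k : ℕ} {A : Set E} {x : E} :
    x ∈ Sstep sys k A ↔ ∃ i ∈ sys.I (k + 1), ∃ a ∈ A, sys.f i a = x := by
  simp only [Sstep, mem_iUnion₂, mem_image, exists_prop]

lemma Sstep_mono (k : ℕ) {A B : Set E} (h : A ⊆ B) : Sstep sys k A ⊆ Sstep sys k B :=
  iUnion₂_mono fun _ _ => image_mono h

lemma SiterN_eq_of_eq_Sstep {F : ℕ → Set E} (hF : ∀ k, F k = Sstep sys k (F (k + 1))) :
    ∀ n k, SiterN sys k n (F (k + n)) = F k
  | 0, _ => rfl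
  | n + 1, k => by
    rw [SiterN, ← Nat.add_assoc, Nat.add_right_comm, SiterN_eq_of_eq_Sstep hF n (k + 1), ← hF]

lemma SiterN_subset_of_Sstep_subset {U : ℕ → Set E} (hU : ∀ k, Sstep sys k (U (k + 1)) ⊆ U k) :
    ∀ n k, SiterN sys k n (U (k + n)) ⊆ U k
  | 0, _ => subset_rfl
  | n + 1, k => by
    rw [SiterN, ← Nat.add_assoc, Nat.add_right_comm]
    exact (Sstep_mono sys k (SiterN_subset_of_Sstep_subset hU n (k + 1))).trans (hU k)

lemma exists_dist_Sstep_le {s C : ℝ} (hs : ∀ i, sys.σ i ≤ s) {k : ℕ} {A B : Set E}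
    (h : ∀ a ∈ A, ∃ b ∈ B, dist a b ≤ C) :
    ∀ x ∈ Sstep sys k A, ∃ y ∈ Sstep sys k B, dist x y ≤ s * C := by
  rintro _ hx
  obtain ⟨i, hi, a, ha, rfl⟩ := sys.mem_Sstep.1 hx
  obtain ⟨b, hb, hab⟩ := h a ha
  refine ⟨sys.f i b, sys.mem_Sstep.2 ⟨i, hi, b, hb, rfl⟩, ?_⟩
  calc dist (sys.f i a) (sys.f i b) ≤ sys.σ i * dist a b := sys.contract i a b
    _ ≤ s * C := mul_le_mul (hs i) hab dist_nonneg ((sys.σ_pos i).le.trans (hs i))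

lemma exists_dist_SiterN_le {s C : ℝ} (hs : ∀ i, sys.σ i ≤ s) {A B : Set E}
    (h : ∀ a ∈ A, ∃ b ∈ B, dist a b ≤ C) :
    ∀ n k, ∀ x ∈ SiterN sys k n A, ∃ y ∈ SiterN sys k n B, dist x y ≤ s ^ n * C
  | 0, _ => by simpa only [SiterN, pow_zero, one_mul] using h
  | n + 1, k => by
    rw [SiterN, SiterN, pow_succ', mul_assoc]
    exact sys.exists_dist_Sstep_le hs (exists_dist_SiterN_le hs h n (k + 1))

lemma subset_closure_of_Sstep_subset {s : ℝ} (hs : ∀ i, sys.σ i ≤ s) (hs1 : s < 1)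
    {F U : ℕ → Set E} (hF : ∀ k, F k = Sstep sys k (F (k + 1)))
    (hU : ∀ k, Sstep sys k (U (k + 1)) ⊆ U k) (hUne : ∀ k, (U k).Nonempty)
    (hbdd : IsBounded ((⋃ k, F k) ∪ ⋃ k, U k)) (k : ℕ) :
    F k ⊆ closure (U k) := by
  set D := diam ((⋃ k, F k) ∪ ⋃ k, U k)
  have hF_near_U : ∀ m, ∀ a ∈ F m, ∃ u ∈ U m, dist a u ≤ D := fun m a ha =>
    let ⟨u, hu⟩ := hUne m
    ⟨u, hu, dist_le_diam_of_mem hbdd (.inl (mem_iUnion_of_mem m ha))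
      (.inr (mem_iUnion_of_mem m hu))⟩
  have hs0 : 0 ≤ s := (sys.σ_pos 0).le.trans (hs 0)
  intro x hx
  refine Metric.mem_closure_iff.2 fun ε hε => ?_
  have hshrink : Tendsto (fun n : ℕ => s ^ n * D) atTop (𝓝 0) := by
    simpa only [zero_mul] using (tendsto_pow_atTop_nhds_zero_of_lt_one hs0 hs1).mul_const D
  obtain ⟨n, hn⟩ := (hshrink.eventually (gt_mem_nhds hε)).exists
  rw [← sys.SiterN_eq_of_eq_Sstep hF n k] at hx
  obtain ⟨y, hy, hxy⟩ := sys.exists_dist_SiterN_le hs (hF_near_U (k + n)) n k x hx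
  exact ⟨y, sys.SiterN_subset_of_Sstep_subset hU n k hy, hxy.trans_lt hn⟩

end NAIFS

theorem attractor_subset_closure_openSets_general {d : ℕ}
    (sys : NAIFS (EuclideanSpace ℝ (Fin d)))
    (U : ℕ → Set (EuclideanSpace ℝ (Fin d))) (ε₀ : ℝ)
    (hosc : GenMoranOSC sys U ε₀)
    (hσ : sSup (Set.range sys.σ) < 1)
    (F : ℕ → Set (EuclideanSpace ℝ (Fin d)))
    (hF : IsPullbackAttractor sys F) :
    ∀ k, F k ⊆ closure (U k) := by
  obtain ⟨hUne, -, hUbdd, hUnest, -, -, -⟩ := hosc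
  obtain ⟨-, hFbdd, hFinv, -⟩ := hF
  have hσ_le : ∀ i, sys.σ i ≤ sSup (Set.range sys.σ) :=
    fun i => le_csSup ⟨1, by rintro _ ⟨j, rfl⟩; exact (sys.σ_lt_one j).le⟩ ⟨i, rfl⟩
  exact sys.subset_closure_of_Sstep_subset hσ_le hσ hFinv hUnest hUne (hFbdd.union hUbdd)

/-- Under the generalised Moran open-set condition, uniformly
bounded fixed points, and `sup σ_i < 1`, the pullback attractor satisfies
`F^k ⊆ closure (U^k)` for every `k`. -/
theorem attractor_subset_closure_openSets {d : ℕ}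
    (sys : NAIFS (EuclideanSpace ℝ (Fin d)))
    (U : ℕ → Set (EuclideanSpace ℝ (Fin d))) (ε₀ : ℝ)
    (hosc : GenMoranOSC sys U ε₀)
    (b : ℕ → EuclideanSpace ℝ (Fin d))
    (hb : ∀ i, sys.f i (b i) = b i)
    (hM : ∃ M : ℝ, ∀ i, ‖b i‖ ≤ M)
    (hσ : sSup (Set.range sys.σ) < 1)
    (F : ℕ → Set (EuclideanSpace ℝ (Fin d)))
    (hF : IsPullbackAttractor sys F) :
    ∀ k, F k ⊆ closure (U k) :=
  attractor_subset_closure_openSets_general sys U ε₀ hosc hσ F hF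
end

section
/- If {F^k} is the pullback attractor of a non-autonomous iterated function system of similarities satisfying the generalised Moran open-set condition, if σ_i = c_k for all i ∈ I_k and all k ∈ ℕ (i.e. all contraction ratios coincide within each step of the iteration), and if there exists N > 0 such that card(I_k) ≤ N for all k ∈ ℕ, then each set F^k is equi-homogeneous. -/
open Set Metric Filter Bornology MeasureTheory
open scoped ENNReal NNReal

variable {E : Type*} [MetricSpace E]

/-- `coverNumber F δ` : the minimum number of closed `δ`-balls with centres in
`F` needed to cover `F` (`∞` if there is no finite such cover). -/
noncomputable def coverNumber {X : Type*} [MetricSpace X] (F : Set X) (δ : ℝ) : ℝ≥0∞ :=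
  ⨅ (t : Finset X) (_ : (t : Set X) ⊆ F) (_ : F ⊆ ⋃ x ∈ t, closedBall x δ),
    (t.card : ℝ≥0∞)

/-- `F` is equi-homogeneous: for every `δ₀ > 0` there are `M ≥ 1` and
`c₁, c₂ > 0` with
`sup_{x∈F} N(B_δ(x) ∩ F, ρ) ≤ M inf_{x∈F} N(B_{c₁δ}(x) ∩ F, c₂ρ)`
for all `0 < ρ < δ ≤ δ₀`. -/
def EquiHomogeneous {X : Type*} [MetricSpace X] (F : Set X) : Prop :=
  ∀ δ₀ : ℝ, 0 < δ₀ → ∃ M c₁ c₂ : ℝ, 1 ≤ M ∧ 0 < c₁ ∧ 0 < c₂ ∧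
    ∀ δ ρ : ℝ, 0 < ρ → ρ < δ → δ ≤ δ₀ →
      (⨆ x ∈ F, coverNumber (closedBall x δ ∩ F) ρ) ≤
        ENNReal.ofReal M * (⨅ x ∈ F, coverNumber (closedBall x (c₁ * δ) ∩ F) (c₂ * ρ))

/-!
Fix a level `k`. Because all maps used at one step share their ratio, every admissible
composition `f_{i₁} ∘ ⋯ ∘ f_{iₙ}` is a similarity with one and the same ratio `rₙ`, and `F^k` is
the union of the images of `F^{k+n}` under these compositions. Attraction of large balls forces
`rₙ → 0`, so at scale `δ` we may take the first `n` with `rₙ · diam F^{k+n} ≤ δ`. Each copy then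
lies in a `δ`-ball around any of its points, which bounds `N(B_δ(y) ∩ F^k, ρ/4)` from below by
`N(F^{k+n}, ρ/(2rₙ))`. Conversely only boundedly many copies meet a `δ`-ball: their parents at
level `n - 1` carry disjoint copies of the open sets `U`, of volume `≳ r_{n-1}^d` inside a ball of
radius `≲ r_{n-1}`, and each parent has at most `N` children. This bounds
`N(B_δ(x) ∩ F^k, ρ)` from above by a constant times `N(F^{k+n}, ρ/(2rₙ))`.
-/

section DistEqMul

variable {X Y : Type*} [MetricSpace X] [MetricSpace Y] {f : X → Y} {σ : ℝ}

lemma injective_of_dist_eq_mul (hσ : 0 < σ) (hf : ∀ x y, dist (f x) (f y) = σ * dist x y) :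
    Function.Injective f := fun x y h =>
  dist_eq_zero.1 ((mul_eq_zero.1 (by rw [← hf, h, dist_self])).resolve_left hσ.ne')

lemma continuous_of_dist_eq_mul (hσ : 0 < σ) (hf : ∀ x y, dist (f x) (f y) = σ * dist x y) :
    Continuous f :=
  (LipschitzWith.of_dist_le_mul (K := ⟨σ, hσ.le⟩) fun x y => (hf x y).le).continuous

end DistEqMul

section CoverNumber

variable {X Y : Type*} [MetricSpace X] [MetricSpace Y]

lemma coverNumber_le_card {A : Set X} {ρ : ℝ} {t : Finset X} (hsub : (t : Set X) ⊆ A)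
    (hcov : A ⊆ ⋃ x ∈ t, closedBall x ρ) : coverNumber A ρ ≤ t.card :=
  iInf₂_le_of_le t hsub (iInf_le _ hcov)

lemma coverNumber_empty (ρ : ℝ) : coverNumber (∅ : Set X) ρ = 0 :=
  nonpos_iff_eq_zero.1 <|
    (coverNumber_le_card (t := ∅) (by simp) (empty_subset _)).trans_eq Nat.cast_zero

lemma le_coverNumber {A : Set X} {ρ : ℝ} {a : ℝ≥0∞}
    (h : ∀ t : Finset X, (t : Set X) ⊆ A → A ⊆ ⋃ x ∈ t, closedBall x ρ → a ≤ t.card) :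
    a ≤ coverNumber A ρ :=
  le_iInf₂ fun t ht => le_iInf (h t ht)

lemma exists_card_le_coverNumber {A : Set X} {ρ : ℝ} (h : coverNumber A ρ ≠ ⊤) :
    ∃ t : Finset X, (t : Set X) ⊆ A ∧ A ⊆ (⋃ x ∈ t, closedBall x ρ) ∧
      (t.card : ℝ≥0∞) ≤ coverNumber A ρ := by
  classical
  have hcover : ∃ n, ∃ t : Finset X, (t : Set X) ⊆ A ∧ A ⊆ (⋃ x ∈ t, closedBall x ρ) ∧
      t.card = n := by
    by_contra! hnone
    exact h (eq_top_iff.2 (le_coverNumber fun t hsub hcov => (hnone _ t hsub hcov rfl).elim))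
  obtain ⟨t, hsub, hcov, hcard⟩ := Nat.find_spec hcover
  refine ⟨t, hsub, hcov, le_coverNumber fun s hs hscov => ?_⟩
  exact_mod_cast hcard ▸ Nat.find_min' hcover ⟨s, hs, hscov, rfl⟩

/-- Centres outside `S` can be moved into `S` at the price of doubling the radius. -/
lemma coverNumber_two_mul_le_card {S : Set X} {ρ : ℝ} {t : Finset X}
    (hcov : S ⊆ ⋃ c ∈ t, closedBall c ρ) : coverNumber S (2 * ρ) ≤ t.card := by
  classical
  let p : X → X := fun c => if h : (closedBall c ρ ∩ S).Nonempty then h.some else c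
  have hp : ∀ c, (closedBall c ρ ∩ S).Nonempty → p c ∈ closedBall c ρ ∩ S := fun c hc => by
    simp only [p, dif_pos hc]
    exact hc.some_mem
  let t' := {c ∈ t | (closedBall c ρ ∩ S).Nonempty}
  refine (coverNumber_le_card (t := t'.image p) ?_ ?_).trans ?_
  · simp only [Finset.coe_image, image_subset_iff]
    exact fun c hc => (hp c (Finset.mem_filter.1 hc).2).2
  · intro s hs
    obtain ⟨c, hct, hsc⟩ := mem_iUnion₂.1 (hcov hs)
    have hne : (closedBall c ρ ∩ S).Nonempty := ⟨s, hsc, hs⟩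
    refine mem_iUnion₂.2 ⟨p c, Finset.mem_image_of_mem p (Finset.mem_filter.2 ⟨hct, hne⟩), ?_⟩
    have := dist_triangle_right s (p c) c
    rw [mem_closedBall] at hsc ⊢
    linarith [mem_closedBall.1 (hp c hne).1]
  · exact_mod_cast Finset.card_image_le.trans (Finset.card_filter_le _ _)

lemma coverNumber_two_mul_le_of_subset {S A : Set X} (hSA : S ⊆ A) (ρ : ℝ) :
    coverNumber S (2 * ρ) ≤ coverNumber A ρ :=
  le_coverNumber fun _ _ hcov => coverNumber_two_mul_le_card (hSA.trans hcov)

lemma coverNumber_biUnion_le {ι : Type*} (s : Finset ι) (A : ι → Set X) (ρ : ℝ) :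
    coverNumber (⋃ i ∈ s, A i) ρ ≤ ∑ i ∈ s, coverNumber (A i) ρ := by
  classical
  by_cases htop : ∃ i ∈ s, coverNumber (A i) ρ = ⊤
  · exact (ENNReal.sum_eq_top.2 htop).symm ▸ le_top
  push Not at htop
  choose t hsub hcov hcard using fun i : s => exists_card_le_coverNumber (htop i i.2)
  refine (coverNumber_le_card (t := s.attach.biUnion t) ?_ ?_).trans ?_
  · simp only [Finset.coe_biUnion, Finset.mem_coe, Finset.mem_attach, iUnion_true,
      iUnion_subset_iff]
    exact fun i => (hsub i).trans (subset_biUnion_of_mem (u := A) i.2)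
  · simp only [iUnion_subset_iff]
    intro i hi x hx
    obtain ⟨c, hc, hxc⟩ := mem_iUnion₂.1 (hcov ⟨i, hi⟩ hx)
    exact mem_iUnion₂.2 ⟨c, Finset.mem_biUnion.2 ⟨⟨i, hi⟩, Finset.mem_attach _ _, hc⟩, hxc⟩
  · calc ((s.attach.biUnion t).card : ℝ≥0∞) ≤ ∑ i ∈ s.attach, ((t i).card : ℝ≥0∞) := by
          exact_mod_cast Finset.card_biUnion_le
      _ ≤ ∑ i ∈ s.attach, coverNumber (A i) ρ := Finset.sum_le_sum fun i _ => hcard i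
      _ = ∑ i ∈ s, coverNumber (A i) ρ := Finset.sum_attach s fun i => coverNumber (A i) ρ

lemma coverNumber_image_of_dist_eq {f : X → Y} {σ : ℝ} (hσ : 0 < σ)
    (hf : ∀ x y, dist (f x) (f y) = σ * dist x y) (A : Set X) (ρ : ℝ) :
    coverNumber (f '' A) (σ * ρ) = coverNumber A ρ := by
  classical
  rcases A.eq_empty_or_nonempty with rfl | ⟨a, ha⟩
  · rw [image_empty, coverNumber_empty, coverNumber_empty]
  have : Nonempty X := ⟨a⟩
  refine le_antisymm (le_coverNumber fun t hsub hcov => ?_) (le_coverNumber fun t hsub hcov => ?_)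
  · refine (coverNumber_le_card (t := t.image f) ?_ ?_).trans
      (by exact_mod_cast Finset.card_image_le)
    · simpa using image_mono hsub
    · rintro _ ⟨x, hx, rfl⟩
      obtain ⟨c, hc, hxc⟩ := mem_iUnion₂.1 (hcov hx)
      refine mem_iUnion₂.2 ⟨f c, Finset.mem_image_of_mem f hc, ?_⟩
      rw [mem_closedBall, hf]
      exact mul_le_mul_of_nonneg_left (mem_closedBall.1 hxc) hσ.le
  · let g := Function.invFunOn f A
    have hg : ∀ c ∈ t, g c ∈ A ∧ f (g c) = c := fun c hc =>
      ⟨Function.invFunOn_mem (hsub hc), Function.invFunOn_eq (hsub hc)⟩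
    refine (coverNumber_le_card (t := t.image g) ?_ ?_).trans
      (by exact_mod_cast Finset.card_image_le)
    · rw [Finset.coe_image, image_subset_iff]
      exact fun c hc => (hg c hc).1
    · intro x hx
      obtain ⟨c, hc, hxc⟩ := mem_iUnion₂.1 (hcov (mem_image_of_mem f hx))
      refine mem_iUnion₂.2 ⟨g c, Finset.mem_image_of_mem g hc, ?_⟩
      rw [mem_closedBall, ← (hg c hc).2, hf] at hxc
      exact mem_closedBall.2 (le_of_mul_le_mul_left hxc hσ)

end CoverNumber

open scoped Finset

open Classical in
def HasSimilarDecompositions {X : Type*} [MetricSpace X] (ι Y : Type*) [MetricSpace Y]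
    (A : Set X) (M : ℕ) : Prop :=
  ∀ δ > 0, ∃ (W : Finset ι) (g : ι → Y → X) (B : Set Y) (r : ℝ), 0 < r ∧
    (∀ w ∈ W, ∀ a b, dist (g w a) (g w b) = r * dist a b) ∧ IsBounded B ∧ r * diam B ≤ δ ∧
    A = (⋃ w ∈ W, g w '' B) ∧ ∀ x, #{w ∈ W | (g w '' B ∩ closedBall x δ).Nonempty} ≤ M

section SimilarCopies

variable {X Y ι : Type*} [MetricSpace X] [MetricSpace Y] {W : Finset ι} {g : ι → Y → X}
  {B : Set Y} {r : ℝ}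

open Classical in
lemma coverNumber_closedBall_inter_biUnion_le (hr : 0 < r)
    (hg : ∀ w ∈ W, ∀ a b, dist (g w a) (g w b) = r * dist a b) (x : X) (δ ρ : ℝ) :
    coverNumber (closedBall x δ ∩ ⋃ w ∈ W, g w '' B) ρ ≤
      #{w ∈ W | (g w '' B ∩ closedBall x δ).Nonempty} * coverNumber B (ρ / (2 * r)) := by
  have hsplit : closedBall x δ ∩ ⋃ w ∈ W, g w '' B =
      ⋃ w ∈ {w ∈ W | (g w '' B ∩ closedBall x δ).Nonempty}, g w '' B ∩ closedBall x δ := by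
    ext z
    simp only [mem_inter_iff, mem_iUnion, Finset.mem_filter, exists_prop]
    exact ⟨fun ⟨hz, w, hw, hzw⟩ => ⟨w, ⟨hw, z, hzw, hz⟩, hzw, hz⟩,
      fun ⟨w, ⟨hw, _⟩, hzw, hz⟩ => ⟨hz, w, hw, hzw⟩⟩
  have hpiece : ∀ w ∈ W, coverNumber (g w '' B ∩ closedBall x δ) ρ ≤
      coverNumber B (ρ / (2 * r)) := fun w hw => by
    calc coverNumber (g w '' B ∩ closedBall x δ) ρ
        = coverNumber (g w '' B ∩ closedBall x δ) (2 * (ρ / 2)) := by ring_nf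
      _ ≤ coverNumber (g w '' B) (ρ / 2) := coverNumber_two_mul_le_of_subset inter_subset_left _
      _ = coverNumber B (ρ / (2 * r)) := by
        rw [← coverNumber_image_of_dist_eq hr (hg w hw)]
        congr 1
        field_simp
  rw [hsplit]
  refine (coverNumber_biUnion_le _ _ ρ).trans ?_
  refine (Finset.sum_le_sum fun w hw => hpiece w (Finset.mem_filter.1 hw).1).trans ?_
  rw [Finset.sum_const, nsmul_eq_mul]

lemma coverNumber_le_coverNumber_closedBall_inter_biUnion (hr : 0 < r)
    (hg : ∀ w ∈ W, ∀ a b, dist (g w a) (g w b) = r * dist a b) (hB : IsBounded B) {δ : ℝ}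
    (hδ : r * diam B ≤ δ) {y : X} (hy : y ∈ ⋃ w ∈ W, g w '' B) (ρ : ℝ) :
    coverNumber B (ρ / (2 * r)) ≤ coverNumber (closedBall y δ ∩ ⋃ w ∈ W, g w '' B) (ρ / 4) := by
  obtain ⟨w, hw, b, hb, rfl⟩ := mem_iUnion₂.1 hy
  have hcopy : g w '' B ⊆ closedBall (g w b) δ ∩ ⋃ w ∈ W, g w '' B := by
    rintro _ ⟨a, ha, rfl⟩
    refine ⟨?_, mem_iUnion₂.2 ⟨w, hw, a, ha, rfl⟩⟩
    rw [mem_closedBall, hg w hw]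
    exact (mul_le_mul_of_nonneg_left (dist_le_diam_of_mem hB ha hb) hr.le).trans hδ
  calc coverNumber B (ρ / (2 * r)) = coverNumber (g w '' B) (2 * (ρ / 4)) := by
        rw [← coverNumber_image_of_dist_eq hr (hg w hw)]
        congr 1
        field_simp
        ring
    _ ≤ _ := coverNumber_two_mul_le_of_subset hcopy _

theorem HasSimilarDecompositions.equiHomogeneous {A : Set X} {M : ℕ}
    (h : HasSimilarDecompositions ι Y A M) (hM : 1 ≤ M) : EquiHomogeneous A := by
  refine fun _ _ => ⟨M, 1, 1 / 4, by exact_mod_cast hM, one_pos, by norm_num,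
    fun δ ρ hρ hρδ _ => ?_⟩
  obtain ⟨W, g, B, r, hr, hg, hB, hδ, rfl, hcount⟩ := h δ (hρ.trans hρδ)
  rw [ENNReal.ofReal_natCast]
  calc (⨆ x ∈ ⋃ w ∈ W, g w '' B, coverNumber (closedBall x δ ∩ ⋃ w ∈ W, g w '' B) ρ)
      ≤ M * coverNumber B (ρ / (2 * r)) := iSup₂_le fun x _ =>
        (coverNumber_closedBall_inter_biUnion_le hr hg x δ ρ).trans
          (mul_le_mul_left (by exact_mod_cast hcount x) _)
    _ ≤ _ := by
      refine mul_le_mul_right (le_iInf₂ fun y hy => ?_) _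
      rw [one_mul, one_div_mul_eq_div]
      exact coverNumber_le_coverNumber_closedBall_inter_biUnion hr hg hB hδ hy ρ

end SimilarCopies

theorem Set.Subsingleton.equiHomogeneous {X : Type*} [MetricSpace X] {A : Set X}
    (hA : A.Subsingleton) : EquiHomogeneous A :=
  fun _ _ => ⟨1, 1, 1, le_rfl, one_pos, one_pos, fun δ ρ _ _ _ => by
    simp only [ENNReal.ofReal_one, one_mul]
    exact iSup₂_le fun x hx => le_iInf₂ fun y hy => by rw [hA hx hy]⟩

section Volume

open Module Pointwise

variable {V : Type*} [NormedAddCommGroup V] [InnerProductSpace ℝ V] [FiniteDimensional ℝ V]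
  [MeasurableSpace V] [BorelSpace V]

/-- On an inner product space `volume` is the Hausdorff measure of dimension `finrank ℝ V`, which
scales by `σ ^ finrank ℝ V` under a similarity of ratio `σ`. -/
lemma volume_image_of_dist_eq_mul {f : V → V} {σ : ℝ} (hσ : 0 < σ)
    (hf : ∀ x y, dist (f x) (f y) = σ * dist x y) (s : Set V) :
    volume (f '' s) = ENNReal.ofReal (σ ^ finrank ℝ V) * volume s := by
  have hiso : Isometry fun x => σ⁻¹ • f x := Isometry.of_dist_eq fun x y => by
    rw [dist_smul₀, hf, Real.norm_eq_abs, abs_inv, abs_of_pos hσ, inv_mul_cancel_left₀ hσ.ne']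
  have himage : f '' s = σ • (fun x => σ⁻¹ • f x) '' s := by
    rw [← image_smul, image_image]
    simp only [smul_inv_smul₀ hσ.ne']
  rw [himage, ← InnerProductSpace.euclideanHausdorffMeasure_eq_volume,
    Measure.euclideanHausdorffMeasure_smul₀ _ hσ.ne', hiso.euclideanHausdorffMeasure_image,
    ENNReal.smul_def, smul_eq_mul, ← ENNReal.ofReal_coe_nnreal, NNReal.coe_pow, coe_nnnorm,
    Real.norm_eq_abs, abs_of_pos hσ]

lemma card_mul_volume_le_of_pairwiseDisjoint {ι : Type*} {P : Finset ι} {g : ι → V → V} {r : ℝ}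
    (hr : 0 < r) (hg : ∀ t ∈ P, ∀ a b, dist (g t a) (g t b) = r * dist a b) {s : Set V}
    (hs : MeasurableSet s) (hdisj : (P : Set ι).PairwiseDisjoint fun t => g t '' s) {x : V}
    {ρ : ℝ} (hsub : ∀ t ∈ P, g t '' s ⊆ closedBall x (r * ρ)) :
    #P * volume s ≤ volume (closedBall (0 : V) ρ) := by
  refine (ENNReal.mul_le_mul_iff_right (ENNReal.ofReal_pos.2 (pow_pos hr (finrank ℝ V))).ne'
    ENNReal.ofReal_ne_top).1 ?_
  have hmeas : ∀ t ∈ P, MeasurableSet (g t '' s) := fun t ht =>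
    hs.image_of_continuousOn_injOn (continuous_of_dist_eq_mul hr (hg t ht)).continuousOn
      (injective_of_dist_eq_mul hr (hg t ht)).injOn
  calc ENNReal.ofReal (r ^ finrank ℝ V) * (#P * volume s)
      = ∑ t ∈ P, volume (g t '' s) := by
        rw [Finset.sum_congr rfl fun t ht => volume_image_of_dist_eq_mul hr (hg t ht) s,
          Finset.sum_const, nsmul_eq_mul, mul_left_comm]
    _ = volume (⋃ t ∈ P, g t '' s) := (measure_biUnion_finset hdisj hmeas).symm
    _ ≤ volume (closedBall x (r * ρ)) := measure_mono (iUnion₂_subset hsub)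
    _ = _ := Measure.addHaar_closedBall_mul_of_pos volume x hr ρ

end Volume

namespace NAIFS

section Words

variable (sys : NAIFS E)

def wordMap : List ℕ → E → E
  | [] => id
  | i :: w => sys.f i ∘ wordMap w

def wordRatio (w : List ℕ) : ℝ := (w.map sys.σ).prod

/-- `words k n` consists of the strings `i₁ ⋯ iₙ` with `iⱼ ∈ I_{k+j}`; the map `f_{i₁} ∘ ⋯ ∘ f_{iₙ}`
of such a string carries level `k + n` to level `k`. -/
def words : ℕ → ℕ → Finset (List ℕ)
  | _, 0 => {[]}
  | k, n + 1 => (sys.I (k + 1)).biUnion fun i => (words (k + 1) n).image (i :: ·)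

variable {sys}

@[simp]
lemma mem_words_zero {k : ℕ} {w : List ℕ} : w ∈ sys.words k 0 ↔ w = [] := by
  simp [words]

lemma mem_words_succ {k n : ℕ} {w : List ℕ} :
    w ∈ sys.words k (n + 1) ↔ ∃ i ∈ sys.I (k + 1), ∃ t ∈ sys.words (k + 1) n, w = i :: t := by
  simp only [words, Finset.mem_biUnion, Finset.mem_image]
  constructor <;> rintro ⟨i, hi, t, ht, rfl⟩ <;> exact ⟨i, hi, t, ht, rfl⟩

lemma words_nonempty (n : ℕ) : ∀ k, (sys.words k n).Nonempty := by
  induction n with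
  | zero => exact fun k => ⟨[], mem_words_zero.2 rfl⟩
  | succ n ih =>
    intro k
    obtain ⟨i, hi⟩ := sys.I_nonempty (k + 1) (Nat.le_add_left 1 k)
    obtain ⟨t, ht⟩ := ih (k + 1)
    exact ⟨i :: t, mem_words_succ.2 ⟨i, hi, t, ht, rfl⟩⟩

lemma exists_append_of_mem_words_succ {n : ℕ} : ∀ {k : ℕ} {w : List ℕ},
    w ∈ sys.words k (n + 1) → ∃ t ∈ sys.words k n, ∃ i ∈ sys.I (k + n + 1), w = t ++ [i] := by
  induction n with
  | zero =>
    intro k w hw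
    obtain ⟨i, hi, t, ht, rfl⟩ := mem_words_succ.1 hw
    exact ⟨[], mem_words_zero.2 rfl, i, hi, by simpa using ht⟩
  | succ n ih =>
    intro k w hw
    obtain ⟨i, hi, t, ht, rfl⟩ := mem_words_succ.1 hw
    obtain ⟨t', ht', j, hj, rfl⟩ := ih ht
    exact ⟨i :: t', mem_words_succ.2 ⟨i, hi, t', ht', rfl⟩, j, by rwa [add_right_comm k], rfl⟩

lemma wordMap_append (v w : List ℕ) : sys.wordMap (v ++ w) = sys.wordMap v ∘ sys.wordMap w := by
  induction v with
  | nil => rfl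
  | cons i v ih => exact congrArg (sys.f i ∘ ·) ih

lemma wordRatio_pos (w : List ℕ) : 0 < sys.wordRatio w :=
  List.prod_pos fun _ hσ => by
    obtain ⟨i, -, rfl⟩ := List.mem_map.1 hσ
    exact sys.σ_pos i

lemma dist_wordMap (hsim : ∀ i x y, dist (sys.f i x) (sys.f i y) = sys.σ i * dist x y)
    (w : List ℕ) (x y : E) :
    dist (sys.wordMap w x) (sys.wordMap w y) = sys.wordRatio w * dist x y := by
  induction w with
  | nil => simp [wordMap, wordRatio]
  | cons i w ih =>
    simp only [wordMap, Function.comp_apply, hsim, ih, wordRatio, List.map_cons, List.prod_cons,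
      mul_assoc]

lemma wordRatio_eq_prod {c : ℕ → ℝ} (hc : ∀ k, 1 ≤ k → ∀ i ∈ sys.I k, sys.σ i = c k) {n : ℕ} :
    ∀ {k : ℕ} {w : List ℕ}, w ∈ sys.words k n →
      sys.wordRatio w = ∏ j ∈ Finset.range n, c (k + j + 1) := by
  induction n with
  | zero => intro k w hw; simp [mem_words_zero.1 hw, wordRatio]
  | succ n ih =>
    intro k w hw
    obtain ⟨i, hi, t, ht, rfl⟩ := mem_words_succ.1 hw
    have hσ : sys.σ i = c (k + 0 + 1) := hc (k + 1) (by omega) i hi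
    simp only [wordRatio, List.map_cons, List.prod_cons] at ih ⊢
    rw [Finset.prod_range_succ', hσ, ih ht, mul_comm]
    exact congrArg (· * _) (Finset.prod_congr rfl fun j _ => congrArg c (by omega))

lemma SiterN_eq_biUnion (n : ℕ) :
    ∀ k (B : Set E), SiterN sys k n B = ⋃ w ∈ sys.words k n, sys.wordMap w '' B := by
  induction n with
  | zero => intro k B; simp [SiterN, words, wordMap]
  | succ n ih =>
    intro k B
    ext z
    simp only [SiterN, Sstep, ih, mem_iUnion, mem_image, exists_prop, mem_words_succ]
    constructor
    · rintro ⟨i, hi, _, ⟨t, ht, b, hb, rfl⟩, rfl⟩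
      exact ⟨i :: t, ⟨i, hi, t, ht, rfl⟩, b, hb, rfl⟩
    · rintro ⟨_, ⟨i, hi, t, ht, rfl⟩, b, hb, rfl⟩
      exact ⟨i, hi, _, ⟨t, ht, b, hb, rfl⟩, rfl⟩

lemma SiterN_subset_of_forall_Sstep_subset {U : ℕ → Set E}
    (hU : ∀ j, Sstep sys j (U (j + 1)) ⊆ U j) (n : ℕ) : ∀ k, SiterN sys k n (U (k + n)) ⊆ U k := by
  induction n with
  | zero => exact fun k => subset_rfl
  | succ n ih =>
    intro k
    refine (biUnion_mono subset_rfl fun i _ => image_mono ?_).trans (hU k)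
    simpa only [add_right_comm k, add_assoc k] using ih (k + 1)

lemma eq_SiterN_of_forall_eq_Sstep {F : ℕ → Set E} (hF : ∀ j, F j = Sstep sys j (F (j + 1)))
    (n : ℕ) : ∀ k, F k = SiterN sys k n (F (k + n)) := by
  induction n with
  | zero => exact fun k => rfl
  | succ n ih =>
    intro k
    rw [hF k, ih (k + 1), show k + 1 + n = k + (n + 1) by omega]
    rfl

lemma wordMap_image_subset {U : ℕ → Set E} (hU : ∀ j, Sstep sys j (U (j + 1)) ⊆ U j)
    {k n : ℕ} {w : List ℕ} (hw : w ∈ sys.words k n) : sys.wordMap w '' U (k + n) ⊆ U k :=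
  (subset_biUnion_of_mem hw).trans
    ((SiterN_eq_biUnion n k _).symm.trans_subset (SiterN_subset_of_forall_Sstep_subset hU n k))

lemma eq_biUnion_wordMap_image {F : ℕ → Set E} (hF : ∀ j, F j = Sstep sys j (F (j + 1)))
    (k n : ℕ) : F k = ⋃ w ∈ sys.words k n, sys.wordMap w '' F (k + n) :=
  (eq_SiterN_of_forall_eq_Sstep hF n k).trans (SiterN_eq_biUnion n k _)

lemma pairwiseDisjoint_wordMap_image
    (hsim : ∀ i x y, dist (sys.f i x) (sys.f i y) = sys.σ i * dist x y) {U : ℕ → Set E}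
    (hU : ∀ j, Sstep sys j (U (j + 1)) ⊆ U j)
    (hsep : ∀ j, 1 ≤ j → ∀ i ∈ sys.I j, ∀ i' ∈ sys.I j, i ≠ i' →
      sys.f i '' U j ∩ sys.f i' '' U j = ∅) (n : ℕ) :
    ∀ k, (sys.words k n : Set (List ℕ)).PairwiseDisjoint fun w => sys.wordMap w '' U (k + n) := by
  induction n with
  | zero =>
    intro k w hw w' hw' hne
    simp only [Finset.mem_coe, mem_words_zero] at hw hw'
    exact (hne (hw.trans hw'.symm)).elim
  | succ n ih =>
    intro k w hw w' hw' hne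
    obtain ⟨i, hi, t, ht, rfl⟩ := mem_words_succ.1 hw
    obtain ⟨i', hi', t', ht', rfl⟩ := mem_words_succ.1 hw'
    have himage : ∀ i t, sys.wordMap (i :: t) '' U (k + (n + 1)) =
        sys.f i '' (sys.wordMap t '' U (k + 1 + n)) := fun i t => by
      rw [show k + (n + 1) = k + 1 + n by omega, ← image_comp]
      rfl
    simp only [Function.onFun, himage]
    by_cases hii : i = i'
    · subst hii
      exact (disjoint_image_iff (injective_of_dist_eq_mul (sys.σ_pos i) (hsim i))).2
        (ih (k + 1) ht ht' fun htt => hne (htt ▸ rfl))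
    · exact (disjoint_iff_inter_eq_empty.2 (hsep (k + 1) (by omega) i hi i' hi' hii)).mono
        (image_mono (wordMap_image_subset hU ht)) (image_mono (wordMap_image_subset hU ht'))

open Classical in
lemma card_filter_words_succ_le {F : ℕ → Set E} (hF : ∀ j, Sstep sys j (F (j + 1)) ⊆ F j)
    (k m : ℕ) (s : Set E) :
    #{w ∈ sys.words k (m + 1) | (sys.wordMap w '' F (k + (m + 1)) ∩ s).Nonempty} ≤
      #{t ∈ sys.words k m | (sys.wordMap t '' F (k + m) ∩ s).Nonempty} * #(sys.I (k + m + 1)) := by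
  set P := {t ∈ sys.words k m | (sys.wordMap t '' F (k + m) ∩ s).Nonempty}
  calc _ ≤ #((P ×ˢ sys.I (k + m + 1)).image fun p => p.1 ++ [p.2]) := Finset.card_le_card ?_
    _ ≤ #(P ×ˢ sys.I (k + m + 1)) := Finset.card_image_le
    _ = _ := Finset.card_product _ _
  intro w hw
  obtain ⟨hw, hmeet⟩ := Finset.mem_filter.1 hw
  obtain ⟨t, ht, i, hi, rfl⟩ := exists_append_of_mem_words_succ hw
  have hsub : sys.wordMap (t ++ [i]) '' F (k + (m + 1)) ⊆ sys.wordMap t '' F (k + m) := by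
    rw [wordMap_append, image_comp]
    exact image_mono ((subset_biUnion_of_mem (u := fun i => sys.f i '' F (k + m + 1)) hi).trans
      (hF (k + m)))
  exact Finset.mem_image.2 ⟨(t, i), Finset.mem_product.2
    ⟨Finset.mem_filter.2 ⟨ht, hmeet.mono (inter_subset_inter_left _ hsub)⟩, hi⟩, rfl⟩

end Words

/-- The attractor absorbs the images of arbitrarily large balls, so deep compositions must
contract by arbitrarily small ratios. -/
lemma exists_wordRatio_le {V : Type*} [NormedAddCommGroup V] [NormedSpace ℝ V] [Nontrivial V]
    {sys : NAIFS V} (hsim : ∀ i x y, dist (sys.f i x) (sys.f i y) = sys.σ i * dist x y)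
    {F : ℕ → Set V} (hF : IsPullbackAttractor sys F) {k : ℕ} (hk : (F k).Nonempty) {ε : ℝ}
    (hε : 0 < ε) : ∃ n, ∀ w ∈ sys.words k n, sys.wordRatio w ≤ ε := by
  obtain ⟨-, hbF, hinv, hattr⟩ := hF
  obtain ⟨R, hR, hbR⟩ := hbF.subset_closedBall_lt 0 (0 : V)
  have hFR : ∀ j, F j ⊆ closedBall 0 R := fun j => (subset_iUnion F j).trans hbR
  obtain ⟨e, he⟩ := exists_norm_eq V (by positivity : 0 ≤ (2 * R + 1) / ε)
  let B := closedBall (0 : V) (R + ‖e‖)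
  obtain ⟨l, hl, -⟩ := (((hattr B isBounded_closedBall k).eventually (gt_mem_nhds one_pos)).and
    (eventually_ge_atTop k)).exists
  refine ⟨l - k, fun w hw => ?_⟩
  obtain ⟨z, hz⟩ : (F (k + (l - k))).Nonempty := by
    obtain ⟨_, hx⟩ := eq_biUnion_wordMap_image hinv k (l - k) ▸ hk
    obtain ⟨_, -, z, hz, -⟩ := mem_iUnion₂.1 hx
    exact ⟨z, hz⟩
  have hy : sys.wordMap w (z + e) ∈ SiterN sys k (l - k) B := by
    rw [SiterN_eq_biUnion]
    refine mem_biUnion hw (mem_image_of_mem _ (mem_closedBall_zero_iff.2 ?_))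
    exact (norm_add_le z e).trans (by linarith [mem_closedBall_zero_iff.1 (hFR _ hz)])
  obtain ⟨q, hq, hyq⟩ := infEDist_lt_iff.1 <| (le_iSup₂
    (f := fun y (_ : y ∈ SiterN sys k (l - k) B) => infEDist y (F k)) _ hy).trans_lt hl
  have hwz : sys.wordMap w z ∈ F k :=
    (eq_biUnion_wordMap_image hinv k (l - k)).symm ▸ mem_biUnion hw (mem_image_of_mem _ hz)
  have hfar : sys.wordRatio w * ‖e‖ < 2 * R + 1 :=
    calc sys.wordRatio w * ‖e‖ = dist (sys.wordMap w (z + e)) (sys.wordMap w z) := by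
          rw [dist_wordMap hsim, dist_eq_norm, add_sub_cancel_left]
      _ ≤ dist (sys.wordMap w (z + e)) q + dist q (sys.wordMap w z) := dist_triangle _ _ _
      _ < 1 + (R + R) := add_lt_add_of_lt_of_le (edist_lt_ofReal.1 (ENNReal.ofReal_one ▸ hyq))
          ((dist_triangle_right _ _ 0).trans (add_le_add (hFR k hq) (hFR k hwz)))
      _ = 2 * R + 1 := by ring
  rw [he, mul_div_assoc', div_lt_iff₀ hε, mul_comm (2 * R + 1)] at hfar
  exact (lt_of_mul_lt_mul_right hfar (by positivity)).le

section Euclidean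

variable {d : ℕ} {sys : NAIFS (EuclideanSpace ℝ (Fin d))} {U F : ℕ → Set (EuclideanSpace ℝ (Fin d))}
  {ε₀ R : ℝ} {K : ℕ}

open Classical in
/-- The copies `w(U^{k+m})` of the open sets are disjoint, have volume at least `r ^ d ε₀` and lie
in a ball of radius `4 R r`, so only boundedly many of them fit. -/
lemma card_filter_words_le_of_le_mul
    (hsim : ∀ i x y, dist (sys.f i x) (sys.f i y) = sys.σ i * dist x y)
    (hosc : GenMoranOSC sys U ε₀) (hFR : ∀ j, F j ⊆ closedBall 0 R)
    (hUR : ∀ j, U j ⊆ closedBall 0 R)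
    (hK : volume (closedBall (0 : EuclideanSpace ℝ (Fin d)) (4 * R)) ≤ K * ENNReal.ofReal ε₀)
    {k m : ℕ} {r : ℝ} (hr : ∀ w ∈ sys.words k m, sys.wordRatio w = r)
    (x : EuclideanSpace ℝ (Fin d)) {δ : ℝ} (hδ : δ ≤ r * (2 * R)) :
    #{w ∈ sys.words k m | (sys.wordMap w '' F (k + m) ∩ closedBall x δ).Nonempty} ≤ K := by
  obtain ⟨-, hUopen, -, hUnest, hUsep, hε₀, hUvol⟩ := hosc
  set P := {w ∈ sys.words k m | (sys.wordMap w '' F (k + m) ∩ closedBall x δ).Nonempty}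
  obtain ⟨w₀, hw₀⟩ := sys.words_nonempty m k
  have hr₀ : 0 < r := hr w₀ hw₀ ▸ wordRatio_pos w₀
  have hdist : ∀ w ∈ P, ∀ a b, dist (sys.wordMap w a) (sys.wordMap w b) = r * dist a b :=
    fun w hw => hr w (Finset.mem_filter.1 hw).1 ▸ dist_wordMap hsim w
  have hsub : ∀ w ∈ P, sys.wordMap w '' U (k + m) ⊆ closedBall x (r * (4 * R)) := by
    rintro w hw _ ⟨u, hu, rfl⟩
    obtain ⟨-, _, ⟨z, hz, rfl⟩, hzx⟩ := Finset.mem_filter.1 hw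
    have huz : dist u z ≤ R + R :=
      (dist_triangle_right u z 0).trans (add_le_add (hUR _ hu) (hFR _ hz))
    rw [mem_closedBall] at hzx ⊢
    calc dist (sys.wordMap w u) x
        ≤ dist (sys.wordMap w u) (sys.wordMap w z) + dist (sys.wordMap w z) x := dist_triangle _ _ _
      _ ≤ r * (R + R) + r * (2 * R) := by
        rw [hdist w hw]
        exact add_le_add (mul_le_mul_of_nonneg_left huz hr₀.le) (hzx.trans hδ)
      _ = r * (4 * R) := by ring
  have hpack := card_mul_volume_le_of_pairwiseDisjoint hr₀ hdist (hUopen _).measurableSet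
    ((pairwiseDisjoint_wordMap_image hsim hUnest hUsep m k).subset
      (Finset.coe_subset.2 (Finset.filter_subset _ _))) hsub
  have hcard : (#P : ℝ≥0∞) * ENNReal.ofReal ε₀ ≤ K * ENNReal.ofReal ε₀ :=
    (mul_le_mul_right (hUvol _) _).trans (hpack.trans hK)
  exact_mod_cast (ENNReal.mul_le_mul_iff_left (ENNReal.ofReal_pos.2 hε₀).ne'
    ENNReal.ofReal_ne_top).1 hcard

open Classical in
lemma card_filter_words_le_of_forall_lt
    (hsim : ∀ i x y, dist (sys.f i x) (sys.f i y) = sys.σ i * dist x y)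
    (hosc : GenMoranOSC sys U ε₀) (hinv : ∀ j, F j = Sstep sys j (F (j + 1)))
    (hFR : ∀ j, F j ⊆ closedBall 0 R) (hUR : ∀ j, U j ⊆ closedBall 0 R)
    (hK : volume (closedBall (0 : EuclideanSpace ℝ (Fin d)) (4 * R)) ≤ K * ENNReal.ofReal ε₀)
    {L : ℕ} (hL : ∀ j, 1 ≤ j → #(sys.I j) ≤ L) {k n : ℕ} {r : ℕ → ℝ}
    (hr : ∀ m, ∀ w ∈ sys.words k m, sys.wordRatio w = r m) {δ : ℝ}
    (hmin : ∀ m < n, δ < r m * (2 * R)) (x : EuclideanSpace ℝ (Fin d)) :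
    #{w ∈ sys.words k n | (sys.wordMap w '' F (k + n) ∩ closedBall x δ).Nonempty} ≤
      max 1 (K * L) := by
  cases n with
  | zero => exact (Finset.card_filter_le _ _).trans (by simp [words])
  | succ m =>
    calc _ ≤ _ := card_filter_words_succ_le (fun j => (hinv j).symm.subset) k m _
      _ ≤ K * L := Nat.mul_le_mul
          (card_filter_words_le_of_le_mul hsim hosc hFR hUR hK (hr m) x (hmin m m.lt_succ_self).le)
          (hL _ (by omega))
      _ ≤ _ := le_max_right _ _

lemma hasSimilarDecompositions
    (hsim : ∀ i x y, dist (sys.f i x) (sys.f i y) = sys.σ i * dist x y)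
    (hosc : GenMoranOSC sys U ε₀) (hinv : ∀ j, F j = Sstep sys j (F (j + 1))) (hR : 0 < R)
    (hFR : ∀ j, F j ⊆ closedBall 0 R) (hUR : ∀ j, U j ⊆ closedBall 0 R)
    (hK : volume (closedBall (0 : EuclideanSpace ℝ (Fin d)) (4 * R)) ≤ K * ENNReal.ofReal ε₀)
    {L : ℕ} (hL : ∀ j, 1 ≤ j → #(sys.I j) ≤ L) {k : ℕ} {r : ℕ → ℝ}
    (hr : ∀ n, ∀ w ∈ sys.words k n, sys.wordRatio w = r n)
    (hsmall : ∀ ε > 0, ∃ n, ∀ w ∈ sys.words k n, sys.wordRatio w ≤ ε) :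
    HasSimilarDecompositions (List ℕ) (EuclideanSpace ℝ (Fin d)) (F k) (max 1 (K * L)) := by
  intro δ hδ
  have hlevel : ∃ n, r n * (2 * R) ≤ δ := by
    obtain ⟨n, hn⟩ := hsmall _ (div_pos hδ (by positivity : 0 < 2 * R))
    obtain ⟨w, hw⟩ := sys.words_nonempty n k
    exact ⟨n, (le_div_iff₀ (by positivity)).1 (hr n w hw ▸ hn w hw)⟩
  obtain ⟨w₀, hw₀⟩ := sys.words_nonempty (Nat.find hlevel) k
  have hr₀ : 0 < r (Nat.find hlevel) := hr _ w₀ hw₀ ▸ wordRatio_pos w₀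
  refine ⟨sys.words k (Nat.find hlevel), sys.wordMap, F (k + Nat.find hlevel), _, hr₀,
    fun w hw => hr _ w hw ▸ dist_wordMap hsim w, isBounded_closedBall.subset (hFR _), ?_,
    eq_biUnion_wordMap_image hinv k _, card_filter_words_le_of_forall_lt hsim hosc hinv hFR hUR
      hK hL hr fun m hm => not_le.1 (Nat.find_min hlevel hm)⟩
  calc r (Nat.find hlevel) * diam (F (k + Nat.find hlevel))
      ≤ r (Nat.find hlevel) * (2 * R) := mul_le_mul_of_nonneg_left
        ((diam_mono (hFR _) isBounded_closedBall).trans (diam_closedBall hR.le)) hr₀.le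
    _ ≤ δ := Nat.find_spec hlevel

end Euclidean

end NAIFS

theorem attractor_equiHomogeneous_of_equal_ratios_of_card_le_general {d : ℕ}
    (sys : NAIFS (EuclideanSpace ℝ (Fin d)))
    (hsim : ∀ i x y, dist (sys.f i x) (sys.f i y) = sys.σ i * dist x y)
    (U : ℕ → Set (EuclideanSpace ℝ (Fin d))) (ε₀ : ℝ)
    (hosc : GenMoranOSC sys U ε₀)
    (c : ℕ → ℝ) (hc : ∀ k, 1 ≤ k → ∀ i ∈ sys.I k, sys.σ i = c k)
    (N : ℝ) (hcard : ∀ k, 1 ≤ k → ((sys.I k).card : ℝ) ≤ N)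
    (F : ℕ → Set (EuclideanSpace ℝ (Fin d)))
    (hF : IsPullbackAttractor sys F) :
    ∀ k, EquiHomogeneous (F k) := by
  have ⟨_, hbF, hinv, _⟩ := hF
  have ⟨_, _, hbU, _, _, hε₀, _⟩ := hosc
  obtain ⟨R, hR, hFUR⟩ := (hbF.union hbU).subset_closedBall_lt 0 0
  have hFR : ∀ j, F j ⊆ closedBall 0 R := fun j =>
    (subset_iUnion F j).trans (subset_union_left.trans hFUR)
  have hUR : ∀ j, U j ⊆ closedBall 0 R := fun j =>
    (subset_iUnion U j).trans (subset_union_right.trans hFUR)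
  replace hε₀ : ENNReal.ofReal ε₀ ≠ 0 := (ENNReal.ofReal_pos.2 hε₀).ne'
  obtain ⟨K, hK⟩ := ENNReal.exists_nat_gt (ENNReal.div_lt_top (measure_closedBall_lt_top
    (μ := volume) (x := (0 : EuclideanSpace ℝ (Fin d))) (r := 4 * R)).ne hε₀).ne
  replace hK := (ENNReal.div_le_iff_le_mul (.inl hε₀) (.inl ENNReal.ofReal_ne_top)).1 hK.le
  have hL : ∀ j, 1 ≤ j → #(sys.I j) ≤ ⌈N⌉₊ := fun j hj => by
    exact_mod_cast (hcard j hj).trans (Nat.le_ceil N)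
  intro k
  rcases (F k).subsingleton_or_nontrivial with hsub | ⟨a, ha, b, -, hab⟩
  · exact hsub.equiHomogeneous
  have : Nontrivial (EuclideanSpace ℝ (Fin d)) := nontrivial_of_ne a b hab
  exact (NAIFS.hasSimilarDecompositions hsim hosc hinv hR hFR hUR hK hL
    (fun n w hw => NAIFS.wordRatio_eq_prod hc hw) fun ε hε =>
      NAIFS.exists_wordRatio_le hsim hF ⟨a, ha⟩ hε).equiHomogeneous (le_max_left _ _)

/-- If the pullback attractor of a non-autonomous IFS of
similarities satisfies the generalised Moran open-set condition, the ratios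
coincide within each step (`σ_i = c_k` for `i ∈ I_k`), and `card(I_k) ≤ N`,
then each `F^k` is equi-homogeneous. -/
theorem attractor_equiHomogeneous_of_equal_ratios_of_card_le {d : ℕ}
    (sys : NAIFS (EuclideanSpace ℝ (Fin d)))
    (hsim : ∀ i x y, dist (sys.f i x) (sys.f i y) = sys.σ i * dist x y)
    (U : ℕ → Set (EuclideanSpace ℝ (Fin d))) (ε₀ : ℝ)
    (hosc : GenMoranOSC sys U ε₀)
    (c : ℕ → ℝ) (hc : ∀ k, 1 ≤ k → ∀ i ∈ sys.I k, sys.σ i = c k)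
    (N : ℝ) (hN : 0 < N) (hcard : ∀ k, 1 ≤ k → ((sys.I k).card : ℝ) ≤ N)
    (F : ℕ → Set (EuclideanSpace ℝ (Fin d)))
    (hF : IsPullbackAttractor sys F) :
    ∀ k, EquiHomogeneous (F k) :=
  attractor_equiHomogeneous_of_equal_ratios_of_card_le_general sys hsim U ε₀ hosc c hc N hcard F hF
end
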